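/- arXiv:1202.5605 — 2 statements merged into one kernel-verified Lean document; each statement's English description precedes it below -/
import Mathlib

section
/- Let R be a commutative noetherian ring and X a resolving subcategory of mod R. For a finitely generated R-module M, the following are equivalent: (1) M ∈ X; (2) M_p ∈ add X_p for all p ∈ Spec R; (3) M_m ∈ add X_m for all maximal ideals m of R. -/
universe u

open CategoryTheory

namespace ResolvPaper

variable (R : Type u) [CommRing R]

/-- `IsSES f g` means `0 → A → B → C → 0` is a short exact sequence. -/
def IsSES {R : Type u} [CommRing R] {A B C : Type u} [AddCommGroup A] [Module R A]
    [AddCommGroup B] [Module R B] [AddCommGroup C] [Module R C]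
    (f : A →ₗ[R] B) (g : B →ₗ[R] C) : Prop :=
  Function.Injective f ∧ Function.Surjective g ∧ LinearMap.range f = LinearMap.ker g

/-- A resolving subcategory of `mod R`, viewed as a set of bundled modules
closed under isomorphism, containing the finitely generated projective modules, and closed
under direct summands, extensions and syzygies. -/
structure IsResolving (𝒳 : Set (ModuleCat.{u} R)) : Prop where
  fg : ∀ M ∈ 𝒳, Module.Finite R M
  iso_closed : ∀ M N : ModuleCat.{u} R, Nonempty (M ≃ₗ[R] N) → M ∈ 𝒳 → N ∈ 𝒳
  proj_mem : ∀ M : ModuleCat.{u} R, Module.Finite R M → Module.Projective R M → M ∈ 𝒳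
  summand_closed : ∀ M N : ModuleCat.{u} R, ModuleCat.of R (↥M × ↥N) ∈ 𝒳 → M ∈ 𝒳
  ext_closed : ∀ (A B C : ModuleCat.{u} R) (f : A →ₗ[R] B) (g : B →ₗ[R] C),
    IsSES f g → A ∈ 𝒳 → C ∈ 𝒳 → B ∈ 𝒳
  syzygy_closed : ∀ (K P M : ModuleCat.{u} R) (f : K →ₗ[R] P) (g : P →ₗ[R] M),
    IsSES f g → Module.Finite R K → Module.Finite R P → Module.Projective R P →
    M ∈ 𝒳 → K ∈ 𝒳

/-- The resolving closure: the smallest resolving subcategory containing `S`. -/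
def resClosure (S : Set (ModuleCat.{u} R)) : Set (ModuleCat.{u} R) :=
  ⋂₀ {𝒳 | IsResolving R 𝒳 ∧ S ⊆ 𝒳}

/-- An extension-closed subcategory of `mod R`: closed under isomorphism,
direct summands and extensions. -/
def IsExtClosed (𝒳 : Set (ModuleCat.{u} R)) : Prop :=
  (∀ M N : ModuleCat.{u} R, Nonempty (M ≃ₗ[R] N) → M ∈ 𝒳 → N ∈ 𝒳) ∧
  (∀ M N : ModuleCat.{u} R, ModuleCat.of R (↥M × ↥N) ∈ 𝒳 → M ∈ 𝒳) ∧
  (∀ (A B C : ModuleCat.{u} R) (f : A →ₗ[R] B) (g : B →ₗ[R] C),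
    IsSES f g → A ∈ 𝒳 → C ∈ 𝒳 → B ∈ 𝒳)

/-- The extension closure of a set of modules. -/
def extClosure (S : Set (ModuleCat.{u} R)) : Set (ModuleCat.{u} R) :=
  ⋂₀ {𝒳 | IsExtClosed R 𝒳 ∧ S ⊆ 𝒳}

/-- `add R`: direct summands of finite free modules. -/
def addR : Set (ModuleCat.{u} R) :=
  {M | ∃ (n : ℕ) (N : ModuleCat.{u} R), Nonempty ((↥M × ↥N) ≃ₗ[R] (Fin n → R))}

/-- `pdLE n M` : the projective dimension of `M` is at most `n`. -/
def pdLE : ℕ → ModuleCat.{u} R → Prop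
  | 0, M => Module.Projective R M
  | n+1, M => ∃ (K P : ModuleCat.{u} R) (f : K →ₗ[R] P) (g : P →ₗ[R] M),
      Module.Finite R P ∧ Module.Projective R P ∧ IsSES f g ∧ pdLE n K

/-- The projective dimension, an element of `WithBot ℕ∞`; the zero module
has projective dimension `⊥ = -∞`. -/
noncomputable def pdim (M : ModuleCat.{u} R) : WithBot ℕ∞ :=
  sInf {x : WithBot ℕ∞ | (x = ⊥ ∧ Subsingleton M) ∨ ∃ n : ℕ, x = (n : ℕ∞) ∧ pdLE R n M}

/-- The depth of `M` with respect to the ideal `I`: the supremum of lengths of weakly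
`M`-regular sequences contained in `I`.  The zero module has depth `∞`. -/
noncomputable def depthE (I : Ideal R) (M : Type u) [AddCommGroup M] [Module R M] : ℕ∞ :=
  sSup {x : ℕ∞ | ∃ rs : List R, (∀ r ∈ rs, r ∈ I) ∧
    RingTheory.Sequence.IsWeaklyRegular M rs ∧ x = rs.length}

/-- The grade of an ideal: the length of a maximal `R`-regular sequence in `I`. -/
noncomputable def gradeE (I : Ideal R) : ℕ∞ := depthE R I R

/-- A grade consistent function on `Spec R`. -/
def GradeConsistent (f : PrimeSpectrum R → ℕ) : Prop :=
  (∀ p : PrimeSpectrum R, (f p : ℕ∞) ≤ gradeE R p.asIdeal) ∧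
  (∀ p q : PrimeSpectrum R, p.asIdeal ≤ q.asIdeal → f p ≤ f q)

/-- The localization of a module at a prime, as a module over the local ring `R_p`. -/
noncomputable abbrev localizeM (p : PrimeSpectrum R) (M : ModuleCat.{u} R) :
    ModuleCat.{u} (Localization.AtPrime p.asIdeal) :=
  ModuleCat.of (Localization.AtPrime p.asIdeal) (LocalizedModule p.asIdeal.primeCompl M)

/-- `pd_{R_p} M_p`. -/
noncomputable def localPdim (p : PrimeSpectrum R) (M : ModuleCat.{u} R) : WithBot ℕ∞ :=
  pdim (Localization.AtPrime p.asIdeal) (localizeM R p M)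

/-- `depth_{R_p} M_p`. -/
noncomputable def localDepth (p : PrimeSpectrum R) (M : ModuleCat.{u} R) : ℕ∞ :=
  depthE (Localization.AtPrime p.asIdeal)
    (IsLocalRing.maximalIdeal (Localization.AtPrime p.asIdeal))
    (LocalizedModule p.asIdeal.primeCompl M)

/-- The height of a prime ideal. -/
noncomputable def heightE (p : PrimeSpectrum R) : ℕ∞ := Order.height p

/-- `PD(R)` : finitely generated modules of finite projective dimension. -/
def PDcat : Set (ModuleCat.{u} R) :=
  {M | Module.Finite R M ∧ ∃ n : ℕ, pdLE R n M}

/-- `MCM(R)` : maximal Cohen-Macaulay modules. -/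
def MCMcat : Set (ModuleCat.{u} R) :=
  {M | Module.Finite R M ∧ ∀ p : PrimeSpectrum R, heightE R p ≤ localDepth R p M}

/-- The nonfree locus of a module. -/
def NF (M : ModuleCat.{u} R) : Set (PrimeSpectrum R) :=
  {p | ¬ Module.Free (Localization.AtPrime p.asIdeal) (LocalizedModule p.asIdeal.primeCompl M)}

/-- The infinite projective dimension locus of a module. -/
def IPD (M : ModuleCat.{u} R) : Set (PrimeSpectrum R) :=
  {p | localPdim R p M = (⊤ : WithBot ℕ∞)}

/-- The infinite projective dimension locus of a collection of modules. -/
def IPDcat (𝒳 : Set (ModuleCat.{u} R)) : Set (PrimeSpectrum R) :=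
  ⋃ M ∈ 𝒳, IPD R M

/-- The modules in `mod R` whose infinite projective dimension locus lies in `W`. -/
def IPDinv (W : Set (PrimeSpectrum R)) : Set (ModuleCat.{u} R) :=
  {M | Module.Finite R M ∧ IPD R M ⊆ W}

/-- A specialization closed subset of `Spec R`. -/
def SpecClosed (W : Set (PrimeSpectrum R)) : Prop :=
  ∀ p ∈ W, ∀ q : PrimeSpectrum R, p.asIdeal ≤ q.asIdeal → q ∈ W

/-- Membership in `add 𝒳_p`: direct summands of localizations of finite direct sums
of members of `𝒳`. -/
def memAddLocal (𝒳 : Set (ModuleCat.{u} R)) (p : PrimeSpectrum R)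
    (N : ModuleCat.{u} (Localization.AtPrime p.asIdeal)) : Prop :=
  ∃ (n : ℕ) (X : Fin n → ModuleCat.{u} R), (∀ i, X i ∈ 𝒳) ∧
    ∃ (N' : ModuleCat.{u} (Localization.AtPrime p.asIdeal)),
      Nonempty ((↥N × ↥N') ≃ₗ[Localization.AtPrime p.asIdeal]
        ((i : Fin n) → LocalizedModule p.asIdeal.primeCompl (X i)))

/-- `K` is an `n`-th syzygy of `M` computed from a minimal free resolution over the
local ring `S`. -/
def IsMinSyz (S : Type u) [CommRing S] [IsLocalRing S] :
    ℕ → ModuleCat.{u} S → ModuleCat.{u} S → Prop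
  | 0, M, K => Nonempty (K ≃ₗ[S] M)
  | n+1, M, K => ∃ (F : ModuleCat.{u} S) (g : F →ₗ[S] M) (K' : ModuleCat.{u} S)
      (i : K' →ₗ[S] F),
      Module.Finite S F ∧ Module.Free S F ∧ Function.Surjective g ∧
      (LinearMap.ker g ≤ (IsLocalRing.maximalIdeal S) • (⊤ : Submodule S F)) ∧
      Function.Injective i ∧ LinearMap.range i = LinearMap.ker g ∧
      IsMinSyz S n K' K

/-- `K` is an `n`-th syzygy of `M` in some projective resolution (over any ring). -/
def IsSyz : ℕ → ModuleCat.{u} R → ModuleCat.{u} R → Prop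
  | 0, M, K => Nonempty (K ≃ₗ[R] M)
  | n+1, M, K => ∃ (F : ModuleCat.{u} R) (g : F →ₗ[R] M) (K' : ModuleCat.{u} R)
      (i : K' →ₗ[R] F),
      Module.Finite R F ∧ Module.Projective R F ∧ Function.Surjective g ∧
      Function.Injective i ∧ LinearMap.range i = LinearMap.ker g ∧
      IsSyz n K' K

/-- `T` is (isomorphic to) the Auslander transpose of `M`, computed from a minimal
free presentation over the local ring `S`. -/
def IsTranspose (S : Type u) [CommRing S] [IsLocalRing S] (M T : ModuleCat.{u} S) : Prop :=
  ∃ (F1 F0 : ModuleCat.{u} S) (d : F1 →ₗ[S] F0) (e : F0 →ₗ[S] M),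
    Module.Finite S F0 ∧ Module.Free S F0 ∧ Module.Finite S F1 ∧ Module.Free S F1 ∧
    Function.Surjective e ∧ LinearMap.range d = LinearMap.ker e ∧
    LinearMap.ker e ≤ (IsLocalRing.maximalIdeal S) • (⊤ : Submodule S F0) ∧
    LinearMap.ker d ≤ (IsLocalRing.maximalIdeal S) • (⊤ : Submodule S F1) ∧
    Nonempty (T ≃ₗ[S] ((Module.Dual S F1) ⧸ LinearMap.range d.dualMap))

/-- `T` is (isomorphic to) `Tr Ω^n M` over the local ring `S`. -/
def IsTrOmega (S : Type u) [CommRing S] [IsLocalRing S] (n : ℕ) (M T : ModuleCat.{u} S) :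
    Prop :=
  ∃ K : ModuleCat.{u} S, IsMinSyz S n M K ∧ IsTranspose S K T

/-- Resolving subcategory `𝒳` is dominant on `W ⊆ Spec R`. -/
def DominantOn (𝒳 : Set (ModuleCat.{u} R)) (W : Set (PrimeSpectrum R)) : Prop :=
  ∀ p ∈ W, ∃ (n : ℕ) (K : ModuleCat.{u} (Localization.AtPrime p.asIdeal)),
    IsMinSyz (Localization.AtPrime p.asIdeal) n
      (ModuleCat.of (Localization.AtPrime p.asIdeal)
        (IsLocalRing.ResidueField (Localization.AtPrime p.asIdeal))) K ∧
    memAddLocal R 𝒳 p K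

/-- Dominant resolving subcategory. -/
def Dominant (𝒳 : Set (ModuleCat.{u} R)) : Prop := DominantOn R 𝒳 Set.univ

/-- A (noetherian) local ring is Cohen-Macaulay if its depth equals its Krull dimension. -/
def IsCMLocalRing (S : Type u) [CommRing S] [IsLocalRing S] : Prop :=
  IsNoetherianRing S ∧
    ((depthE S (IsLocalRing.maximalIdeal S) S : WithBot ℕ∞) = ringKrullDim S)

/-- A regular local ring: a noetherian local ring whose maximal ideal is generated by
`dim S` elements. -/
def IsRegLocalRing (S : Type u) [CommRing S] [IsLocalRing S] : Prop :=
  IsNoetherianRing S ∧ ∃ s : Finset S,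
    Ideal.span (s : Set S) = IsLocalRing.maximalIdeal S ∧
    ringKrullDim S = (s.card : WithBot ℕ∞)

/-- The singular locus of `R`. -/
def SingLocus : Set (PrimeSpectrum R) :=
  {p | ¬ IsRegLocalRing (Localization.AtPrime p.asIdeal)}

/-- A hypersurface local ring: the completion is a quotient of a regular local ring by
one element. -/
def IsHypersurfaceLocalRing (S : Type u) [CommRing S] [IsLocalRing S] : Prop :=
  ∃ (T : Type u) (_ : CommRing T) (_ : IsLocalRing T) (f : T),
    IsRegLocalRing T ∧
    Nonempty ((AdicCompletion (IsLocalRing.maximalIdeal S) S) ≃+* (T ⧸ Ideal.span {f}))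

/-- A complete intersection local ring: the completion is a quotient of a regular local
ring by a regular sequence. -/
def IsCompleteIntersectionLocalRing (S : Type u) [CommRing S] [IsLocalRing S] : Prop :=
  ∃ (T : Type u) (_ : CommRing T) (_ : IsLocalRing T) (rs : List T),
    IsRegLocalRing T ∧ RingTheory.Sequence.IsRegular T rs ∧
    Nonempty ((AdicCompletion (IsLocalRing.maximalIdeal S) S) ≃+*
      (T ⧸ Ideal.ofList rs))

/-- The subquotient `A / (A ⊓ B)` of two submodules, used for homology. -/
def subquot {S M : Type u} [CommRing S] [AddCommGroup M] [Module S M]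
    (A B : Submodule S M) : Type u :=
  A ⧸ (B.comap A.subtype)

noncomputable instance {S M : Type u} [CommRing S] [AddCommGroup M] [Module S M]
    (A B : Submodule S M) : AddCommGroup (subquot A B) :=
  inferInstanceAs (AddCommGroup (A ⧸ (B.comap A.subtype)))

noncomputable instance {S M : Type u} [CommRing S] [AddCommGroup M] [Module S M]
    (A B : Submodule S M) : Module S (subquot A B) :=
  inferInstanceAs (Module S (A ⧸ (B.comap A.subtype)))

/-- `E` is (isomorphic to) `Ext^{j+1}_S(M, S)`, computed from a finite free resolution. -/
def IsExtPos (S : Type u) [CommRing S] (j : ℕ) (M E : ModuleCat.{u} S) : Prop :=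
  ∃ (F : ℕ → ModuleCat.{u} S) (d : ∀ i : ℕ, (F (i+1) : Type u) →ₗ[S] F i)
    (e : (F 0 : Type u) →ₗ[S] M),
    (∀ i, Module.Finite S (F i)) ∧ (∀ i, Module.Free S (F i)) ∧
    Function.Surjective e ∧ LinearMap.range (d 0) = LinearMap.ker e ∧
    (∀ i, LinearMap.range (d (i+1)) = LinearMap.ker (d i)) ∧
    Nonempty (E ≃ₗ[S]
      subquot (LinearMap.ker ((d (j+1)).dualMap)) (LinearMap.range ((d j).dualMap)))

/-- `T` is (isomorphic to) `Tor_n^S(M, N)`, computed from a projective resolution of `M`. -/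
def IsTor (S : Type u) [CommRing S] (n : ℕ) (M N T : ModuleCat.{u} S) : Prop :=
  ∃ (F : ℕ → ModuleCat.{u} S) (d : ∀ i : ℕ, (F (i+1) : Type u) →ₗ[S] F i)
    (e : (F 0 : Type u) →ₗ[S] M),
    (∀ i, Module.Projective S (F i)) ∧
    Function.Surjective e ∧ LinearMap.range (d 0) = LinearMap.ker e ∧
    (∀ i, LinearMap.range (d (i+1)) = LinearMap.ker (d i)) ∧
    (match n with
      | 0 => Nonempty (T ≃ₗ[S] TensorProduct S M N)
      | (j+1) => Nonempty (T ≃ₗ[S]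
          subquot (LinearMap.ker (LinearMap.rTensor (↥N) (d j)))
            (LinearMap.range (LinearMap.rTensor (↥N) (d (j+1))))))

/-- `idLE n M` : the injective dimension of `M` is at most `n`. -/
def idLE (S : Type u) [CommRing S] : ℕ → ModuleCat.{u} S → Prop
  | 0, M => Module.Injective S M
  | n+1, M => ∃ (I C : ModuleCat.{u} S) (f : M →ₗ[S] I) (g : I →ₗ[S] C),
      IsSES f g ∧ Module.Injective S I ∧ idLE S n C

/-- `PD_0^n(R)` over a local ring: modules of projective dimension at most `n` that are
free on the punctured spectrum. -/
def PD0n [IsLocalRing R] (n : ℕ) : Set (ModuleCat.{u} R) :=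
  {M | Module.Finite R M ∧ pdLE R n M ∧
    ∀ p : PrimeSpectrum R, p.asIdeal ≠ IsLocalRing.maximalIdeal R →
      Module.Free (Localization.AtPrime p.asIdeal) (LocalizedModule p.asIdeal.primeCompl M)}

/-- `PD_0(R)` over a local ring: modules of finite projective dimension that are
free on the punctured spectrum. -/
def PD0 [IsLocalRing R] : Set (ModuleCat.{u} R) :=
  {M | Module.Finite R M ∧ (∃ n : ℕ, pdLE R n M) ∧
    ∀ p : PrimeSpectrum R, p.asIdeal ≠ IsLocalRing.maximalIdeal R →
      Module.Free (Localization.AtPrime p.asIdeal) (LocalizedModule p.asIdeal.primeCompl M)}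

/-- The residue field of a local ring, as a bundled module. -/
noncomputable abbrev residueMod (S : Type u) [CommRing S] [IsLocalRing S] : ModuleCat.{u} S :=
  ModuleCat.of S (IsLocalRing.ResidueField S)

end ResolvPaper

/-! The endomorphisms of `M` that factor through some module of `𝒳` form an `R`-submodule
of `End_R M`, since `𝒳` is closed under finite direct sums, and `M ∈ 𝒳` as soon as this
submodule contains `id_M`, since `𝒳` is closed under direct summands. Membership in a submodule
is a local property, and for finitely presented `M` the localization of `End_R M` at `m` is
`End_{R_m} M_m`. A splitting `M_m ⊕ N ≅ ⊕ᵢ (Xᵢ)_m` writes `id_{M_m}` as a sum of composites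
`M_m → (Xᵢ)_m → M_m`, and clearing denominators lifts each of them to a composite
`M → Xᵢ → M`. -/

lemma LocalizedModule.map_comp {R M N P : Type*} [CommSemiring R] (S : Submonoid R)
    [AddCommMonoid M] [Module R M] [AddCommMonoid N] [Module R N] [AddCommMonoid P] [Module R P]
    (f : M →ₗ[R] N) (g : N →ₗ[R] P) :
    LocalizedModule.map S (g ∘ₗ f) = LocalizedModule.map S g ∘ₗ LocalizedModule.map S f := by
  ext x
  induction x using LocalizedModule.induction_on with | _ m s => simp

lemma LocalizedModule.mk'_map_comp {R M N P : Type*} [CommRing R] (S : Submonoid R)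
    [AddCommGroup M] [Module R M] [AddCommGroup N] [Module R N] [AddCommGroup P] [Module R P]
    [Module.FinitePresentation R M] [Module.FinitePresentation R N]
    (f : M →ₗ[R] N) (g : N →ₗ[R] P) (s t : S) :
    IsLocalizedModule.mk' (LocalizedModule.map S) (g ∘ₗ f) (s * t) =
      IsLocalizedModule.mk' (LocalizedModule.map S) g t ∘ₗ
        IsLocalizedModule.mk' (LocalizedModule.map S) f s := by
  rw [IsLocalizedModule.mk'_eq_iff, LocalizedModule.map_comp, mul_comm, mul_smul,
    ← IsLocalizedModule.mk'_cancel' (LocalizedModule.map S) g t,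
    ← IsLocalizedModule.mk'_cancel' (LocalizedModule.map S) f s, LinearMap.smul_comp,
    LinearMap.comp_smul]

namespace ResolvPaper

variable (R : Type u) [CommRing R]

section

variable {R} {𝒳 : Set (ModuleCat.{u} R)}

lemma IsResolving.prod_mem (h𝒳 : IsResolving R 𝒳) {A B : ModuleCat.{u} R} (hA : A ∈ 𝒳)
    (hB : B ∈ 𝒳) : ModuleCat.of R (A × B) ∈ 𝒳 :=
  h𝒳.ext_closed A _ B (LinearMap.inl R A B) (LinearMap.snd R A B)
    ⟨LinearMap.inl_injective, LinearMap.snd_surjective, LinearMap.range_inl R A B⟩ hA hB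

lemma IsResolving.mem_of_retract (h𝒳 : IsResolving R 𝒳) {M Y : ModuleCat.{u} R} (hY : Y ∈ 𝒳)
    (i : M →ₗ[R] Y) (r : Y →ₗ[R] M) (hri : r ∘ₗ i = LinearMap.id) : M ∈ 𝒳 := by
  obtain ⟨e, -⟩ := Function.Exact.splitInjectiveEquiv (LinearMap.exact_map_mkQ_range i)
    (Submodule.mkQ_surjective _) ⟨r, hri⟩
  exact h𝒳.summand_closed M (ModuleCat.of R (Y ⧸ LinearMap.range i)) (h𝒳.iso_closed Y _ ⟨e⟩ hY)

def IsResolving.factoringEnds (h𝒳 : IsResolving R 𝒳) (M : ModuleCat.{u} R) :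
    Submodule R (M →ₗ[R] M) where
  carrier := {h | ∃ Y ∈ 𝒳, ∃ (f : M →ₗ[R] Y) (g : Y →ₗ[R] M), g ∘ₗ f = h}
  zero_mem' := ⟨ModuleCat.of R PUnit, h𝒳.proj_mem _ inferInstance inferInstance, 0, 0, rfl⟩
  add_mem' := by
    rintro _ _ ⟨Y₁, hY₁, f₁, g₁, rfl⟩ ⟨Y₂, hY₂, f₂, g₂, rfl⟩
    exact ⟨_, h𝒳.prod_mem hY₁ hY₂, f₁.prod f₂, g₁.coprod g₂, rfl⟩
  smul_mem' := by
    rintro c _ ⟨Y, hY, f, g, rfl⟩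
    exact ⟨Y, hY, f, c • g, rfl⟩

lemma IsResolving.comp_mem_localized₀_factoringEnds (h𝒳 : IsResolving R 𝒳) (S : Submonoid R)
    {M Y : ModuleCat.{u} R} [Module.FinitePresentation R M] [Module.FinitePresentation R Y]
    (hY : Y ∈ 𝒳) (f : LocalizedModule S M →ₗ[Localization S] LocalizedModule S Y)
    (g : LocalizedModule S Y →ₗ[Localization S] LocalizedModule S M) :
    g ∘ₗ f ∈ (h𝒳.factoringEnds M).localized₀ S (LocalizedModule.map S) := by
  obtain ⟨⟨f₀, s⟩, rfl⟩ := IsLocalizedModule.mk'_surjective S (LocalizedModule.map S) f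
  obtain ⟨⟨g₀, t⟩, rfl⟩ := IsLocalizedModule.mk'_surjective S (LocalizedModule.map S) g
  exact ⟨g₀ ∘ₗ f₀, ⟨Y, hY, f₀, g₀, rfl⟩, s * t, LocalizedModule.mk'_map_comp S f₀ g₀ s t⟩

lemma memAddLocal_of_mem {M : ModuleCat.{u} R} (hM : M ∈ 𝒳) (p : PrimeSpectrum R) :
    memAddLocal R 𝒳 p (localizeM R p M) :=
  ⟨1, fun _ ↦ M, fun _ ↦ hM, ModuleCat.of _ PUnit,
    ⟨LinearEquiv.prodUnique.trans (LinearEquiv.funUnique (Fin 1) _ _).symm⟩⟩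

lemma IsResolving.mem_of_forall_memAddLocal_maximal [IsNoetherianRing R]
    (h𝒳 : IsResolving R 𝒳) {M : ModuleCat.{u} R} [Module.Finite R M]
    (h : ∀ p : PrimeSpectrum R, p.asIdeal.IsMaximal → memAddLocal R 𝒳 p (localizeM R p M)) :
    M ∈ 𝒳 := by
  have := Module.finitePresentation_of_finite R M
  suffices LinearMap.id ∈ h𝒳.factoringEnds M by
    obtain ⟨Y, hY, i, r, hri⟩ := this
    exact h𝒳.mem_of_retract hY i r hri
  refine Submodule.mem_of_localization_maximal _ (fun P _ ↦ LocalizedModule.map P.primeCompl)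
    _ _ fun P hP ↦ ?_
  rw [LocalizedModule.map_id]
  obtain ⟨n, X, hX, N, ⟨e⟩⟩ := h ⟨P, hP.isPrime⟩ hP
  have (i : Fin n) : Module.FinitePresentation R (X i) :=
    have := h𝒳.fg _ (hX i)
    Module.finitePresentation_of_finite R _
  have hsplit : LinearMap.id = ∑ i, (LinearMap.fst _ _ N ∘ₗ e.symm.toLinearMap ∘ₗ
      LinearMap.single _ _ i) ∘ₗ (LinearMap.proj i ∘ₗ e.toLinearMap ∘ₗ LinearMap.inl _ _ N) := by
    ext x
    simp only [LinearMap.id_coe, id_eq, LinearMap.coe_sum, LinearMap.coe_comp,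
      LinearMap.coe_fst, LinearEquiv.coe_coe, LinearMap.coe_single, LinearMap.coe_proj,
      LinearMap.coe_inl, Finset.sum_apply, Function.comp_apply, Function.eval]
    rw [← Prod.fst_sum, ← map_sum, Finset.univ_sum_single, LinearEquiv.symm_apply_apply]
  rw [hsplit]
  exact Submodule.sum_mem _ fun i _ ↦ h𝒳.comp_mem_localized₀_factoringEnds _ (hX i) _ _

end

/-- Proposition: membership in a resolving subcategory is a local condition. -/
theorem mem_resolving_local [IsNoetherianRing R]
    (𝒳 : Set (ModuleCat.{u} R)) (h𝒳 : IsResolving R 𝒳)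
    (M : ModuleCat.{u} R) (hM : Module.Finite R M) :
    (M ∈ 𝒳 ↔ ∀ p : PrimeSpectrum R, memAddLocal R 𝒳 p (localizeM R p M)) ∧
    (M ∈ 𝒳 ↔ ∀ p : PrimeSpectrum R, p.asIdeal.IsMaximal →
      memAddLocal R 𝒳 p (localizeM R p M)) :=
  ⟨⟨fun h p ↦ memAddLocal_of_mem h p,
      fun h ↦ h𝒳.mem_of_forall_memAddLocal_maximal fun p _ ↦ h p⟩,
    ⟨fun h p _ ↦ memAddLocal_of_mem h p, h𝒳.mem_of_forall_memAddLocal_maximal⟩⟩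

end ResolvPaper
end

section
/- Let R be a commutative noetherian local ring with depth R = t > 0, let L be a nonzero finitely generated R-module of finite length, and let 0 ≤ n < t be an integer. Let ⋯ → F_1 → F_0 → L → 0 be a minimal free resolution of L with differentials d_i. Then the sequence 0 → F_0^* → F_1^* → ⋯ → F_n^* → F_{n+1}^* → Tr Ω^n L → 0 obtained by dualizing (applying Hom_R(−, R)) is exact and gives a minimal free resolution of Tr Ω^n L; consequently Ω^i Tr Ω^n L ≅ Tr Ω^{n-i} L for 0 ≤ i ≤ n, Ω^{n+1} Tr Ω^n L ≅ F_0^*, Ω^i Tr Ω^n L = 0 for i ≥ n+2, and pd_R(Tr Ω^n L) = n + 1. -/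
universe u

open CategoryTheory

namespace ResolvPaper

variable (R : Type u) [CommRing R]

/-! Since `L` has finite length, every element of the maximal ideal acts nilpotently on `L`, and
multiplication by an element of `ann L` is null-homotopic on `F_•`. Dividing by regular elements
one at a time, induction along an `R`-regular sequence of length `t` gives `Ext^j_R(L, R) = 0` for
`j < t`: the dual complex `0 → F_0^* → ⋯ → F_{n+1}^*` is exact, and it is minimal because `F_•` is.
Read backwards it is a minimal free resolution of `Tr Ω^n L = coker d_n^*`, with syzygies
`coker d_{n-i}^* = Tr Ω^{n-i} L` and finally the nonzero free module `F_0^*`. Minimal resolutions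
are unique up to isomorphism (Nakayama), and a finite projective resolution can be compared with
the minimal one by Schanuel's lemma, which gives `pd (Tr Ω^n L) = n + 1`. -/

section LocalRing

variable {R : Type u} [CommRing R] [IsLocalRing R]

open IsLocalRing LinearMap

theorem surjective_of_comp_surjective {A B M : Type*} [AddCommGroup A] [Module R A]
    [AddCommGroup B] [Module R B] [AddCommGroup M] [Module R M] [Module.Finite R B]
    {α : A →ₗ[R] B} {β : B →ₗ[R] M} (hβ : ker β ≤ maximalIdeal R • ⊤)
    (hβα : Function.Surjective (β ∘ₗ α)) : Function.Surjective α := by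
  refine range_eq_top.mp (top_le_iff.mp (Submodule.le_of_le_smul_of_le_jacobson_bot
    Module.Finite.fg_top (maximalIdeal_le_jacobson ⊥) fun y _ ↦ ?_))
  obtain ⟨x, hx⟩ := hβα (β y)
  have hker : y - α x ∈ ker β := by simp [← hx]
  simpa using Submodule.add_mem_sup (mem_range_self α x) (hβ hker)

theorem exists_linearEquiv_comp_eq {F F' M : Type*} [AddCommGroup F] [Module R F]
    [AddCommGroup F'] [Module R F'] [AddCommGroup M] [Module R M]
    [Module.Finite R F] [Module.Finite R F'] [Module.Projective R F] [Module.Projective R F']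
    {g : F →ₗ[R] M} {g' : F' →ₗ[R] M} (hg : Function.Surjective g)
    (hg' : Function.Surjective g') (hmin : ker g ≤ maximalIdeal R • ⊤)
    (hmin' : ker g' ≤ maximalIdeal R • ⊤) :
    ∃ φ : F ≃ₗ[R] F', g' ∘ₗ φ.toLinearMap = g := by
  obtain ⟨φ, hφ⟩ := Module.projective_lifting_property g' g hg'
  obtain ⟨ψ, hψ⟩ := Module.projective_lifting_property g g' hg
  have hφs : Function.Surjective φ := surjective_of_comp_surjective hmin' (hφ ▸ hg)
  have hψs : Function.Surjective ψ := surjective_of_comp_surjective hmin (hψ ▸ hg')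
  have hψφ : Function.Injective (ψ ∘ₗ φ) :=
    OrzechProperty.injective_of_surjective_endomorphism _ (hψs.comp hφs)
  exact ⟨.ofBijective φ ⟨Function.Injective.of_comp (f := ψ) hψφ, hφs⟩, hφ⟩

theorem injective_of_projective_of_ker_le_smul {F M : Type*} [AddCommGroup F] [Module R F]
    [AddCommGroup M] [Module R M] [Module.Finite R F] [Module.Projective R F]
    [Module.Projective R M] {g : F →ₗ[R] M} (hg : Function.Surjective g)
    (hmin : ker g ≤ maximalIdeal R • ⊤) : Function.Injective g := by
  have : Module.Finite R M := .of_surjective g hg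
  obtain ⟨φ, hφ⟩ := exists_linearEquiv_comp_eq (g' := LinearMap.id) hg
    Function.surjective_id hmin (by simp)
  simpa [← hφ] using φ.injective

theorem exists_ker_linearEquiv_prod {P F N : Type u} [AddCommGroup P] [Module R P]
    [AddCommGroup F] [Module R F] [AddCommGroup N] [Module R N]
    [Module.Finite R P] [Module.Projective R P] [Module.Finite R F] [Module.Projective R F]
    {g : P →ₗ[R] N} {G : F →ₗ[R] N} (hg : Function.Surjective g)
    (hG : Function.Surjective G) (hmin : ker G ≤ maximalIdeal R • ⊤) :
    ∃ Q : Submodule R P, Module.Finite R Q ∧ Module.Projective R Q ∧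
      Nonempty (ker g ≃ₗ[R] ker G × Q) := by
  obtain ⟨φ, hφ⟩ := Module.projective_lifting_property G g hG
  have hφs : Function.Surjective φ := surjective_of_comp_surjective hmin (hφ ▸ hg)
  obtain ⟨s, hs⟩ := Module.projective_lifting_property φ LinearMap.id hφs
  have hφs' (y : F) : φ (s y) = y := congr($hs y)
  have hgφ (x : P) : G (φ x) = g x := congr($hφ x)
  let r : P →ₗ[R] ker φ := (LinearMap.id - s ∘ₗ φ).codRestrict _ fun x ↦ by simp [hφs']
  have hr : r ∘ₗ (ker φ).subtype = LinearMap.id := by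
    ext ⟨x, hx⟩
    rw [LinearMap.mem_ker] at hx
    simp [r, hx]
  refine ⟨ker φ, .of_surjective r (LinearMap.surjective_of_comp_eq_id _ _ hr),
    .of_split _ r hr, ?_⟩
  have hker : ker φ ≤ ker g := fun x hx ↦ by simp_all [← hgφ]
  let γ : ker g →ₗ[R] ker G := φ.restrict fun x hx ↦ by simpa [hgφ] using hx
  let σ : ker G →ₗ[R] ker g := s.restrict fun y hy ↦ by simpa [← hgφ, hφs'] using hy
  have hexact : Function.Exact (Submodule.inclusion hker) γ := by
    rintro ⟨x, hx⟩
    simp [γ, Subtype.ext_iff]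
  have hγσ : γ ∘ₗ σ = LinearMap.id := by ext; simp [γ, σ, hφs']
  exact ⟨(hexact.splitSurjectiveEquiv (Submodule.inclusion_injective hker) ⟨σ, hγσ⟩).1.trans
    (LinearEquiv.prodComm R _ _)⟩

theorem range_dualMap_le_smul {A B : Type*} [AddCommGroup A] [Module R A] [AddCommGroup B]
    [Module R B] [Module.Free R B] [Module.Finite R B] {f : B →ₗ[R] A}
    (hf : range f ≤ maximalIdeal R • ⊤) :
    range f.dualMap ≤ maximalIdeal R • ⊤ := by
  rintro _ ⟨φ, rfl⟩
  have hφ : maximalIdeal R • ⊤ ≤ Submodule.comap φ (maximalIdeal R) :=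
    Submodule.smul_le.mpr fun r hr x _ ↦ by simpa using Ideal.mul_mem_right _ _ hr
  let b := Module.Free.chooseBasis R B
  rw [← b.sum_dual_apply_smul_coord (f.dualMap φ)]
  exact Submodule.sum_mem _ fun c _ ↦ Submodule.smul_mem_smul (hφ (hf ⟨b c, rfl⟩)) trivial

end LocalRing

section MinimalSyzygy

variable {R : Type u} [CommRing R] [IsLocalRing R]

open IsLocalRing LinearMap

theorem isMinSyz_one_of_exact {K C M : Type u} [AddCommGroup K] [Module R K]
    [AddCommGroup C] [Module R C] [AddCommGroup M] [Module R M]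
    [Module.Finite R C] [Module.Free R C] {i : K →ₗ[R] C} {g : C →ₗ[R] M}
    (hi : Function.Injective i) (hg : Function.Surjective g) (hig : range i = ker g)
    (hmin : ker g ≤ maximalIdeal R • ⊤) : IsMinSyz R 1 (.of R M) (.of R K) :=
  ⟨.of R C, g, .of R K, i, ‹_›, ‹_›, hg, hmin, hi, hig, ⟨.refl R _⟩⟩

theorem isMinSyz_one_quotient {A B C : Type u} [AddCommGroup A] [Module R A]
    [AddCommGroup B] [Module R B] [AddCommGroup C] [Module R C]
    [Module.Finite R C] [Module.Free R C] {f : A →ₗ[R] B} {g : B →ₗ[R] C}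
    (hfg : range f = ker g) (hg : range g ≤ maximalIdeal R • ⊤) :
    IsMinSyz R 1 (.of R (C ⧸ range g)) (.of R (B ⧸ range f)) :=
  isMinSyz_one_of_exact (ker_eq_bot.mp (Submodule.ker_liftQ_eq_bot' _ g hfg))
    (Submodule.mkQ_surjective _) (by rw [Submodule.range_liftQ, Submodule.ker_mkQ])
    (by rwa [Submodule.ker_mkQ])

namespace IsMinSyz

variable {a b j : ℕ} {M M' K K' : ModuleCat.{u} R}

theorem congr_left (e : M ≃ₗ[R] M') (h : IsMinSyz R j M K) : IsMinSyz R j M' K := by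
  cases j with
  | zero => exact ⟨h.some.trans e⟩
  | succ j =>
    obtain ⟨F, g, K₁, i, hF, hF', hg, hmin, hi, hig, h⟩ := h
    refine ⟨F, e.toLinearMap ∘ₗ g, K₁, i, hF, hF', e.surjective.comp hg, ?_, hi, ?_, h⟩ <;>
      rwa [LinearEquiv.ker_comp]

theorem add {K₁ : ModuleCat.{u} R} (h₁ : IsMinSyz R a M K₁) (h₂ : IsMinSyz R b K₁ K) :
    IsMinSyz R (a + b) M K := by
  induction a generalizing M with
  | zero => simpa using h₂.congr_left h₁.some
  | succ a ih =>
    obtain ⟨F, g, K₂, i, hF, hF', hg, hmin, hi, hig, h⟩ := h₁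
    rw [Nat.add_right_comm]
    exact ⟨F, g, K₂, i, hF, hF', hg, hmin, hi, hig, ih h⟩

theorem exists_of_add (h : IsMinSyz R (a + b) M K) :
    ∃ K₁ : ModuleCat.{u} R, IsMinSyz R a M K₁ ∧ IsMinSyz R b K₁ K := by
  induction a generalizing M with
  | zero => exact ⟨M, ⟨.refl R _⟩, by simpa using h⟩
  | succ a ih =>
    rw [Nat.add_right_comm] at h
    obtain ⟨F, g, K₂, i, hF, hF', hg, hmin, hi, hig, h⟩ := h
    obtain ⟨K₁, h₁, h₂⟩ := ih h
    exact ⟨K₁, ⟨F, g, K₂, i, hF, hF', hg, hmin, hi, hig, h₁⟩, h₂⟩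

theorem nonempty_linearEquiv (h : IsMinSyz R j M K) (h' : IsMinSyz R j M K') :
    Nonempty (K ≃ₗ[R] K') := by
  induction j generalizing M with
  | zero => exact ⟨h.some.trans h'.some.symm⟩
  | succ j ih =>
    obtain ⟨F, g, K₁, i, hF, hF', hg, hmin, hi, hig, h⟩ := h
    obtain ⟨F', g', K₁', i', hG, hG', hg', hmin', hi', hig', h'⟩ := h'
    obtain ⟨φ, hφ⟩ := exists_linearEquiv_comp_eq hg hg' hmin hmin'
    have hker : (ker g).map φ.toLinearMap = ker g' := by
      rw [← hφ, ker_comp, Submodule.map_comap_eq_of_surjective φ.surjective]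
    let e : K₁ ≃ₗ[R] K₁' :=
      ((LinearEquiv.ofInjective i hi).trans (.ofEq _ _ hig)).trans <|
        (φ.submoduleMap (ker g)).trans <| (LinearEquiv.ofEq _ _ hker).trans <|
          ((LinearEquiv.ofInjective i' hi').trans (.ofEq _ _ hig')).symm
    exact ih (h.congr_left e) h'

theorem exists_subsingleton_of_projective [Module.Projective R M]
    (h : IsMinSyz R (j + 1) M K) :
    ∃ K₁ : ModuleCat.{u} R, Subsingleton K₁ ∧ IsMinSyz R j K₁ K := by
  obtain ⟨F, g, K₁, i, hF, hF', hg, hmin, hi, hig, h⟩ := h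
  have hker : ker g = ⊥ := ker_eq_bot.mpr (injective_of_projective_of_ker_le_smul hg hmin)
  refine ⟨K₁, ⟨fun x y ↦ hi ?_⟩, h⟩
  have hx : i x ∈ ker g := hig ▸ mem_range_self i x
  have hy : i y ∈ ker g := hig ▸ mem_range_self i y
  simp_all

theorem subsingleton [Subsingleton M] (h : IsMinSyz R j M K) : Subsingleton K := by
  induction j generalizing M with
  | zero => exact h.some.toEquiv.subsingleton
  | succ j ih =>
    obtain ⟨K₁, _, h⟩ := h.exists_subsingleton_of_projective
    exact ih h

theorem subsingleton_of_projective [Module.Projective R M] (hj : j ≠ 0)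
    (h : IsMinSyz R j M K) : Subsingleton K := by
  obtain ⟨j, rfl⟩ := Nat.exists_eq_succ_of_ne_zero hj
  obtain ⟨K₁, _, h⟩ := h.exists_subsingleton_of_projective
  exact h.subsingleton

theorem subsingleton_of_lt {k : ℕ} {P : ModuleCat.{u} R} [Module.Projective R P]
    (hP : IsMinSyz R k M P) (hkj : k < j) (h : IsMinSyz R j M K) : Subsingleton K := by
  rw [show j = k + (j - k) by omega] at h
  obtain ⟨K₁, h₁, h₂⟩ := h.exists_of_add
  have : Module.Projective R K₁ := .of_equiv (h₁.nonempty_linearEquiv hP).some.symm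
  exact h₂.subsingleton_of_projective (by omega)

end IsMinSyz

end MinimalSyzygy

section ProjectiveDimension

variable {R : Type u} [CommRing R] [IsLocalRing R]

open IsLocalRing LinearMap

theorem IsMinSyz.prod_right {j : ℕ} {M K : ModuleCat.{u} R} {Q : Type u} [AddCommGroup Q]
    [Module R Q] [Module.Finite R Q] [Module.Free R Q] (h : IsMinSyz R (j + 1) M K) :
    IsMinSyz R (j + 1) (.of R (M × Q)) K := by
  obtain ⟨F, g, K₁, i, hF, hF', hg, hmin, hi, hig, h⟩ := h
  refine ⟨.of R (F × Q), g.prodMap LinearMap.id, K₁, inl R F Q ∘ₗ i, inferInstance,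
    inferInstance, hg.prodMap Function.surjective_id, ?_, inl_injective.comp hi, ?_, h⟩
  · rw [ker_prodMap, ker_id, ← Submodule.map_inl]
    refine (Submodule.map_mono hmin).trans ?_
    rw [Submodule.map_smul'']
    exact Submodule.smul_mono le_rfl le_top
  · rw [range_comp, hig, ker_prodMap, ker_id, Submodule.map_inl]

theorem IsMinSyz.projective_of_pdLE {a : ℕ} {M K : ModuleCat.{u} R} (hpd : pdLE R a M)
    (h : IsMinSyz R a M K) : Module.Projective R K := by
  induction a generalizing M K with
  | zero =>
    have : Module.Projective R M := hpd
    exact .of_equiv h.some.symm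
  | succ a ih =>
    obtain ⟨K₁, P, f, g, hP, hP', ⟨hf, hg, hfg⟩, hpd⟩ := hpd
    obtain ⟨F, g', K₁', i, hF, hF', hg', hmin, hi, hig, h⟩ := h
    obtain ⟨Q, hQ, hQ', ⟨E⟩⟩ := exists_ker_linearEquiv_prod hg hg' hmin
    have : Module.Free R Q := Module.free_of_flat_of_isLocalRing
    let e : K₁ ≃ₗ[R] K₁' × Q :=
      ((LinearEquiv.ofInjective f hf).trans (.ofEq _ _ hfg)).trans <| E.trans <|
        (((LinearEquiv.ofInjective i hi).trans (.ofEq _ _ hig)).symm.prodCongr (.refl R Q))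
    cases a with
    | zero =>
      have : Module.Projective R K₁ := hpd
      have : Module.Projective R (K₁' × Q) := .of_equiv e
      have : Module.Projective R K₁' := .of_split (inl R K₁' Q) (fst R K₁' Q) (by ext; simp)
      exact .of_equiv h.some.symm
    | succ a => exact ih hpd ((h.prod_right (Q := Q)).congr_left e.symm)

theorem pdLE_of_isMinSyz {j : ℕ} {M K : ModuleCat.{u} R} [Module.Projective R K]
    (h : IsMinSyz R j M K) : pdLE R j M := by
  induction j generalizing M with
  | zero => exact Module.Projective.of_equiv h.some
  | succ j ih =>
    obtain ⟨F, g, K₁, i, hF, hF', hg, -, hi, hig, h⟩ := h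
    exact ⟨K₁, F, i, g, hF, inferInstance, ⟨hi, hg, hig⟩, ih h⟩

theorem pdim_eq_of_isMinSyz {k : ℕ} {M K : ModuleCat.{u} R} [Module.Projective R K]
    [Nontrivial K] (h : IsMinSyz R k M K) : pdim R M = ((k : ℕ∞) : WithBot ℕ∞) := by
  refine le_antisymm (sInf_le (Or.inr ⟨k, rfl, pdLE_of_isMinSyz h⟩)) (le_sInf ?_)
  rintro _ (⟨rfl, hM⟩ | ⟨m, rfl, hm⟩)
  · exact absurd h.subsingleton (not_subsingleton K)
  · rw [WithBot.coe_le_coe, Nat.cast_le]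
    by_contra! hlt
    obtain ⟨K₁, h₁, -⟩ := (show k = m + (k - m) by omega) ▸ h |>.exists_of_add
    have := h₁.projective_of_pdLE hm
    exact not_subsingleton K (h₁.subsingleton_of_lt hlt h)

end ProjectiveDimension

section Vanishing

variable {R : Type u} [CommRing R]

open LinearMap RingTheory.Sequence

open scoped Pointwise

theorem exists_comp_eq_of_range_le {P M N : Type*} [AddCommGroup P] [Module R P]
    [AddCommGroup M] [Module R M] [AddCommGroup N] [Module R N] [Module.Projective R P]
    (f : M →ₗ[R] N) {τ : P →ₗ[R] N} (h : range τ ≤ range f) : ∃ σ : P →ₗ[R] M, f ∘ₗ σ = τ := by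
  obtain ⟨σ, hσ⟩ := Module.projective_lifting_property f.rangeRestrict
    (τ.codRestrict _ fun x ↦ h ⟨x, rfl⟩) f.surjective_rangeRestrict
  exact ⟨σ, ext fun x ↦ congr(($hσ x : N))⟩

theorem exists_eq_smul_of_mkQ_comp_eq_zero {M C : Type*} [AddCommGroup M] [Module R M]
    [AddCommGroup C] [Module R C] {y : R} (hy : IsSMulRegular C y) {ψ : M →ₗ[R] C}
    (hψ : (y • (⊤ : Submodule R C)).mkQ ∘ₗ ψ = 0) : ∃ σ : M →ₗ[R] C, ψ = y • σ := by
  have hψ' (x : M) : ψ x ∈ range (y • LinearMap.id : C →ₗ[R] C) := by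
    obtain ⟨c, -, hc⟩ := (Submodule.mem_smul_pointwise_iff_exists _ _ _).mp
      ((Submodule.Quotient.mk_eq_zero _).mp congr($hψ x))
    exact ⟨c, hc⟩
  let E := LinearEquiv.ofInjective (y • LinearMap.id : C →ₗ[R] C) fun _ _ h ↦ hy h
  refine ⟨E.symm.toLinearMap ∘ₗ ψ.codRestrict _ hψ', ext fun x ↦ ?_⟩
  exact congr(($(E.apply_symm_apply (ψ.codRestrict _ hψ' x)) : C)).symm

variable {F : ℕ → ModuleCat.{u} R}

variable (d : ∀ i : ℕ, (F (i + 1) : Type u) →ₗ[R] F i) in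
/-- Coboundaries of `Hom(F_•, C)` for the complex `F_•` without augmentation, so that in degree `0`
only `0` is a coboundary. -/
def IsCoboundary {C : Type*} [AddCommGroup C] [Module R C] :
    ∀ j : ℕ, ((F j : Type u) →ₗ[R] C) → Prop
  | 0, φ => φ = 0
  | j + 1, φ => ∃ ψ : (F j : Type u) →ₗ[R] C, φ = ψ ∘ₗ d j

variable {d : ∀ i : ℕ, (F (i + 1) : Type u) →ₗ[R] F i} {C : Type*} [AddCommGroup C]
  [Module R C]

namespace IsCoboundary

theorem comp_eq_zero (hd : ∀ i, d i ∘ₗ d (i + 1) = 0) {j : ℕ} {φ : (F j : Type u) →ₗ[R] C}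
    (h : IsCoboundary d j φ) : φ ∘ₗ d j = 0 := by
  cases j with
  | zero => rw [show φ = 0 from h, zero_comp]
  | succ j =>
    obtain ⟨ψ, rfl⟩ := h
    rw [comp_assoc, hd, comp_zero]

theorem exists_lift (hF : ∀ i, Module.Projective R (F i)) {D : Type*} [AddCommGroup D]
    [Module R D] {π : C →ₗ[R] D} (hπ : Function.Surjective π) {j : ℕ}
    {χ : (F j : Type u) →ₗ[R] D} (h : IsCoboundary d j χ) :
    ∃ χ' : (F j : Type u) →ₗ[R] C, IsCoboundary d j χ' ∧ π ∘ₗ χ' = χ := by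
  cases j with
  | zero => exact ⟨0, rfl, by rw [show χ = 0 from h, comp_zero]⟩
  | succ j =>
    obtain ⟨ψ, rfl⟩ := h
    have := hF j
    obtain ⟨τ, hτ⟩ := Module.projective_lifting_property π ψ hπ
    exact ⟨τ ∘ₗ d j, ⟨τ, rfl⟩, by rw [← comp_assoc, hτ]⟩

/-- A coboundary of `C/yC` lifts to `C`, and what remains takes values in `yC`, so it can be
divided by `y`. -/
theorem of_smul (hF : ∀ i, Module.Projective R (F i)) (hd : ∀ i, d i ∘ₗ d (i + 1) = 0)
    {y : R} (hy : IsSMulRegular C y) {j : ℕ}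
    (hquot : ∀ j' < j, ∀ χ : (F j' : Type u) →ₗ[R] QuotSMulTop y C, χ ∘ₗ d j' = 0 →
      IsCoboundary d j' χ)
    {φ : (F j : Type u) →ₗ[R] C} (h : IsCoboundary d j (y • φ)) : IsCoboundary d j φ := by
  cases j with
  | zero => exact ext fun x ↦ hy (by simpa using congr($h x))
  | succ j =>
    obtain ⟨ψ, hψ⟩ := h
    let π := (y • (⊤ : Submodule R C)).mkQ
    have hπψ : (π ∘ₗ ψ) ∘ₗ d j = 0 := by
      refine ext fun x ↦ (Submodule.Quotient.mk_eq_zero _).mpr ?_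
      have hx : y • φ x = ψ (d j x) := congr($hψ x)
      exact hx ▸ Submodule.smul_mem_pointwise_smul (φ x) y (⊤ : Submodule R C) trivial
    obtain ⟨χ, hχ, hπχ⟩ :=
      (hquot j j.lt_succ_self _ hπψ).exists_lift hF (Submodule.mkQ_surjective _)
    obtain ⟨σ, hσ⟩ := exists_eq_smul_of_mkQ_comp_eq_zero hy (ψ := ψ - χ)
      (by rw [comp_sub, hπχ, sub_self])
    refine ⟨σ, ext fun x ↦ hy ?_⟩
    have hχx : χ (d j x) = 0 := congr($(hχ.comp_eq_zero hd) x)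
    calc y • φ x = ψ (d j x) := congr($hψ x)
      _ = (ψ - χ) (d j x) := by simp [hχx]
      _ = y • σ (d j x) := congr($hσ (d j x))

theorem of_pow_smul (hF : ∀ i, Module.Projective R (F i)) (hd : ∀ i, d i ∘ₗ d (i + 1) = 0)
    {y : R} (hy : IsSMulRegular C y) {j : ℕ}
    (hquot : ∀ j' < j, ∀ χ : (F j' : Type u) →ₗ[R] QuotSMulTop y C, χ ∘ₗ d j' = 0 →
      IsCoboundary d j' χ)
    {φ : (F j : Type u) →ₗ[R] C} (k : ℕ) (h : IsCoboundary d j (y ^ k • φ)) :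
    IsCoboundary d j φ := by
  induction k generalizing φ with
  | zero => simpa using h
  | succ k ih => exact (ih (by rwa [pow_succ, mul_smul] at h)).of_smul hF hd hy hquot

end IsCoboundary

variable {L : Type*} [AddCommGroup L] [Module R L] {e : (F 0 : Type u) →ₗ[R] L}

/-- Multiplication by `z ∈ ann L` on `F_•` is null-homotopic; this is the homotopy identity in
degree `i + 1`, modulo boundaries. -/
theorem exists_smul_sub_mem_range (hF : ∀ i, Module.Projective R (F i))
    (he : range (d 0) = ker e) (hd : ∀ i, range (d (i + 1)) = ker (d i))
    {z : R} (hz : z ∈ Module.annihilator R L) (i : ℕ) :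
    ∃ s : (F i : Type u) →ₗ[R] F (i + 1), ∀ x, z • x - s (d i x) ∈ range (d (i + 1)) := by
  induction i with
  | zero =>
    have := hF 0
    obtain ⟨s, hs⟩ := exists_comp_eq_of_range_le (d 0) (τ := z • LinearMap.id) <| by
      rintro _ ⟨x, rfl⟩
      simp [he, Module.mem_annihilator.mp hz]
    refine ⟨s, fun x ↦ ?_⟩
    have hsx : d 0 (s (d 0 x)) = z • d 0 x := congr($hs (d 0 x))
    rw [hd 0, mem_ker, map_sub, map_smul, hsx, sub_self]
  | succ i ih =>
    obtain ⟨s, hs⟩ := ih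
    have := hF (i + 1)
    obtain ⟨s', hs'⟩ := exists_comp_eq_of_range_le (d (i + 1))
      (τ := z • LinearMap.id - s ∘ₗ d i) (by rintro _ ⟨x, rfl⟩; exact hs x)
    refine ⟨s', fun x ↦ ?_⟩
    have hx : d i (d (i + 1) x) = 0 := (hd i).le ⟨x, rfl⟩
    have hsx : d (i + 1) (s' (d (i + 1) x)) = z • d (i + 1) x - s (d i (d (i + 1) x)) :=
      congr($hs' (d (i + 1) x))
    rw [hd (i + 1), mem_ker, map_sub, map_smul, hsx, hx]
    simp

theorem isCoboundary_smul_of_mem_annihilator (hF : ∀ i, Module.Projective R (F i))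
    (he : range (d 0) = ker e) (hd : ∀ i, range (d (i + 1)) = ker (d i))
    {z : R} (hz : z ∈ Module.annihilator R L) {j : ℕ} {φ : (F j : Type u) →ₗ[R] C}
    (hφ : φ ∘ₗ d j = 0) : IsCoboundary d j (z • φ) := by
  cases j with
  | zero =>
    refine ext fun x ↦ ?_
    obtain ⟨w, hw⟩ : z • x ∈ range (d 0) := by simp [he, Module.mem_annihilator.mp hz]
    have hw' : φ (d 0 w) = 0 := congr($hφ w)
    simp [← map_smul, ← hw, hw']
  | succ j =>
    obtain ⟨s, hs⟩ := exists_smul_sub_mem_range hF he hd hz j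
    refine ⟨φ ∘ₗ s, ext fun x ↦ ?_⟩
    obtain ⟨w, hw⟩ := hs x
    have hw' : φ (d (j + 1) w) = 0 := congr($hφ w)
    calc (z • φ) x = φ (z • x) := by simp
      _ = φ (s (d j x)) := by rw [← sub_eq_zero, ← map_sub, ← hw, hw']

/-- `Ext^j_R(L, C) = 0` below the length of a `C`-regular sequence in `√(ann L)`. -/
theorem isCoboundary_of_isWeaklyRegular (hF : ∀ i, Module.Projective R (F i))
    (he : range (d 0) = ker e) (hd : ∀ i, range (d (i + 1)) = ker (d i)) {rs : List R}
    (hrs : ∀ r ∈ rs, r ∈ (Module.annihilator R L).radical) (hreg : IsWeaklyRegular C rs)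
    {j : ℕ} (hj : j < rs.length) {φ : (F j : Type u) →ₗ[R] C} (hφ : φ ∘ₗ d j = 0) :
    IsCoboundary d j φ := by
  have hdd (i : ℕ) : d i ∘ₗ d (i + 1) = 0 :=
    (LinearMap.exact_iff.mpr (hd i).symm).linearMap_comp_eq_zero
  induction rs generalizing C j with
  | nil => simp at hj
  | cons y rs ih =>
    obtain ⟨k, hk⟩ := hrs y List.mem_cons_self
    rw [isWeaklyRegular_cons_iff] at hreg
    refine (isCoboundary_smul_of_mem_annihilator hF he hd hk hφ).of_pow_smul hF hdd hreg.1
      (fun j' hj' χ hχ ↦ ?_) k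
    exact ih (fun r hr ↦ hrs r (List.mem_cons_of_mem y hr)) hreg.2
      (by simp only [List.length_cons] at hj; omega) hχ

theorem injective_dualMap_of_isCoboundary
    (h : ∀ φ : Module.Dual R (F 0), φ ∘ₗ d 0 = 0 → IsCoboundary d 0 φ) :
    Function.Injective (d 0).dualMap :=
  (injective_iff_map_eq_zero _).mpr fun φ hφ ↦ h φ (by rwa [dualMap_apply'] at hφ)

theorem range_dualMap_eq_ker_of_isCoboundary {i : ℕ} (hd : d i ∘ₗ d (i + 1) = 0)
    (h : ∀ φ : Module.Dual R (F (i + 1)), φ ∘ₗ d (i + 1) = 0 → IsCoboundary d (i + 1) φ) :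
    range (d i).dualMap = ker (d (i + 1)).dualMap := by
  refine le_antisymm ?_ fun φ hφ ↦ ?_
  · rintro _ ⟨ψ, rfl⟩
    rw [mem_ker, dualMap_apply', dualMap_apply', comp_assoc, hd, comp_zero]
  · obtain ⟨ψ, hψ⟩ := h φ (by rwa [mem_ker, dualMap_apply'] at hφ)
    exact ⟨ψ, hψ.symm⟩

theorem nontrivial_dual_of_projective {V : Type*} [AddCommGroup V] [Module R V]
    [Module.Projective R V] [Nontrivial V] : Nontrivial (Module.Dual R V) := by
  obtain ⟨x, hx⟩ := exists_ne (0 : V)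
  obtain ⟨φ, hφ⟩ := Module.Projective.exists_dual_ne_zero R hx
  exact nontrivial_of_ne φ 0 fun h ↦ hφ (by simp [h])

end Vanishing

section FiniteLengthAndDepth

variable {R : Type u} [CommRing R]

open IsLocalRing LinearMap

theorem maximalIdeal_le_radical_annihilator [IsLocalRing R] {L : Type*} [AddCommGroup L]
    [Module R L] (hL : IsFiniteLength R L) :
    maximalIdeal R ≤ (Module.annihilator R L).radical := by
  intro y hy
  obtain ⟨_, _⟩ := isFiniteLength_iff_isNoetherian_isArtinian.mp hL
  obtain ⟨n, hn⟩ := IsArtinian.range_smul_pow_stabilizes L y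
  set N := range (y ^ n • LinearMap.id : L →ₗ[R] L)
  have hN : N ≤ maximalIdeal R • N := by
    rintro _ ⟨x, rfl⟩
    obtain ⟨x', hx'⟩ : y ^ n • x ∈ range (y ^ (n + 1) • LinearMap.id : L →ₗ[R] L) :=
      hn (n + 1) n.le_succ ▸ ⟨x, rfl⟩
    have : y ^ n • x = y • (y ^ n • x') := by simpa [pow_succ', mul_smul] using hx'.symm
    show y ^ n • x ∈ _
    rw [this]
    exact Submodule.smul_mem_smul hy (mem_range_self _ x')
  have hN : N = ⊥ := Submodule.eq_bot_of_le_smul_of_le_jacobson_bot _ N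
    (IsNoetherian.noetherian N) hN (maximalIdeal_le_jacobson ⊥)
  refine ⟨n, Module.mem_annihilator.mpr fun x ↦ ?_⟩
  have hx : (y ^ n • LinearMap.id : L →ₗ[R] L) x ∈ N := mem_range_self _ x
  simpa [hN] using hx

theorem exists_isWeaklyRegular_of_depthE_eq {I : Ideal R} {M : Type u} [AddCommGroup M]
    [Module R M] {t : ℕ} (h : depthE R I M = t) :
    ∃ rs : List R, (∀ r ∈ rs, r ∈ I) ∧ RingTheory.Sequence.IsWeaklyRegular M rs ∧
      rs.length = t := by
  unfold depthE at h
  have : Nonempty {x : ℕ∞ | ∃ rs : List R, (∀ r ∈ rs, r ∈ I) ∧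
      RingTheory.Sequence.IsWeaklyRegular M rs ∧ x = rs.length} :=
    ⟨0, [], by simp, .nil R M, rfl⟩
  obtain ⟨rs, hI, hreg, hlen⟩ := ENat.sSup_mem_of_nonempty_of_lt_top (h ▸ ENat.natCast_lt_top t)
  exact ⟨rs, hI, hreg, by exact_mod_cast (h ▸ hlen).symm⟩

end FiniteLengthAndDepth

section MinimalResolution

variable {R : Type u} [CommRing R] [IsLocalRing R] {F : ℕ → ModuleCat.{u} R}
  {d : ∀ i : ℕ, (F (i + 1) : Type u) →ₗ[R] F i}

open IsLocalRing LinearMap Module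

theorem isCoboundary_of_depthE_eq (hF : ∀ i, Module.Projective R (F i)) {L : Type*}
    [AddCommGroup L] [Module R L] {e : (F 0 : Type u) →ₗ[R] L} (hex0 : range (d 0) = ker e)
    (hex : ∀ i, range (d (i + 1)) = ker (d i)) (hlen : IsFiniteLength R L) {t : ℕ}
    (hdepth : depthE R (maximalIdeal R) R = t) {j : ℕ} (hj : j < t) {φ : Dual R (F j)}
    (hφ : φ ∘ₗ d j = 0) : IsCoboundary d j φ := by
  obtain ⟨rs, hrs, hreg, rfl⟩ := exists_isWeaklyRegular_of_depthE_eq hdepth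
  exact isCoboundary_of_isWeaklyRegular hF hex0 hex
    (fun r hr ↦ maximalIdeal_le_radical_annihilator hlen (hrs r hr)) hreg hj hφ

theorem isMinSyz_quotient_range (hFfin : ∀ i, Module.Finite R (F i))
    (hFfree : ∀ i, Module.Free R (F i)) {L : ModuleCat.{u} R} {e : (F 0 : Type u) →ₗ[R] L}
    (he : Function.Surjective e) (hex0 : range (d 0) = ker e)
    (hex : ∀ i, range (d (i + 1)) = ker (d i)) (hmin : ∀ i, range (d i) ≤ maximalIdeal R • ⊤)
    (j : ℕ) : IsMinSyz R j L (.of R (F j ⧸ range (d j))) := by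
  induction j with
  | zero => exact ⟨(Submodule.quotEquivOfEq _ _ hex0).trans (e.quotKerEquivOfSurjective he)⟩
  | succ j ih =>
    have := hFfin j
    have := hFfree j
    exact ih.add (isMinSyz_one_quotient (hex j) (hmin j))

theorem isTrOmega_of_nonempty_linearEquiv (hFfin : ∀ i, Module.Finite R (F i))
    (hFfree : ∀ i, Module.Free R (F i)) {L : ModuleCat.{u} R} {e : (F 0 : Type u) →ₗ[R] L}
    (he : Function.Surjective e) (hex0 : range (d 0) = ker e)
    (hex : ∀ i, range (d (i + 1)) = ker (d i)) (hmin : ∀ i, range (d i) ≤ maximalIdeal R • ⊤)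
    {j : ℕ} {K : ModuleCat.{u} R}
    (hK : Nonempty (K ≃ₗ[R] Dual R (F (j + 1)) ⧸ range (d j).dualMap)) :
    IsTrOmega R j L K :=
  ⟨_, isMinSyz_quotient_range hFfin hFfree he hex0 hex hmin j, F (j + 1), F j, d j,
    (range (d j)).mkQ, hFfin j, hFfree j, hFfin (j + 1), hFfree (j + 1),
    Submodule.mkQ_surjective _, (Submodule.ker_mkQ _).symm, (Submodule.ker_mkQ _).trans_le (hmin j),
    hex j ▸ hmin (j + 1), hK⟩

theorem isMinSyz_quotient_range_dualMap (hFfin : ∀ i, Module.Finite R (F i))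
    (hFfree : ∀ i, Module.Free R (F i)) {n : ℕ}
    (hexact : ∀ i < n, range (d i).dualMap = ker (d (i + 1)).dualMap)
    (hmin : ∀ i, range (d i).dualMap ≤ maximalIdeal R • ⊤) {i w : ℕ} (hiw : i + w = n) :
    IsMinSyz R i (.of R (Dual R (F (n + 1)) ⧸ range (d n).dualMap))
      (.of R (Dual R (F (w + 1)) ⧸ range (d w).dualMap)) := by
  induction i generalizing w with
  | zero =>
    obtain rfl : w = n := by omega
    exact ⟨.refl R _⟩
  | succ i ih =>
    have := hFfin (w + 2)
    have := hFfree (w + 2)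
    exact (ih (w := w + 1) (by omega)).add
      (isMinSyz_one_quotient (hexact w (by omega)) (hmin (w + 1)))

theorem isMinSyz_succ_quotient_range_dualMap (hFfin : ∀ i, Module.Finite R (F i))
    (hFfree : ∀ i, Module.Free R (F i)) {n : ℕ}
    (hexact : ∀ i < n, range (d i).dualMap = ker (d (i + 1)).dualMap)
    (hmin : ∀ i, range (d i).dualMap ≤ maximalIdeal R • ⊤)
    (hinj : Function.Injective (d 0).dualMap) :
    IsMinSyz R (n + 1) (.of R (Dual R (F (n + 1)) ⧸ range (d n).dualMap)) (.of R (Dual R (F 0))) :=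
  have := hFfin 1
  have := hFfree 1
  (isMinSyz_quotient_range_dualMap hFfin hFfree hexact hmin n.add_zero).add
    (isMinSyz_one_of_exact hinj (Submodule.mkQ_surjective _) (Submodule.ker_mkQ _).symm
      ((Submodule.ker_mkQ _).trans_le (hmin 0)))

end MinimalResolution

theorem dual_of_minimal_resolution [IsLocalRing R]
    (t : ℕ) (hdepth : depthE R (IsLocalRing.maximalIdeal R) R = (t : ℕ∞))
    (L : ModuleCat.{u} R) (hL : Nontrivial L) (hlen : IsFiniteLength R L)
    (n : ℕ) (hn : n < t)
    (F : ℕ → ModuleCat.{u} R) (d : ∀ i : ℕ, (F (i+1) : Type u) →ₗ[R] F i)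
    (e : (F 0 : Type u) →ₗ[R] L)
    (hFfin : ∀ i, Module.Finite R (F i)) (hFfree : ∀ i, Module.Free R (F i))
    (he : Function.Surjective e) (hex0 : LinearMap.range (d 0) = LinearMap.ker e)
    (hex : ∀ i, LinearMap.range (d (i+1)) = LinearMap.ker (d i))
    (hmin : ∀ i, LinearMap.range (d i) ≤
      (IsLocalRing.maximalIdeal R) • (⊤ : Submodule R (F i)))
    (T : ModuleCat.{u} R)
    (hT : T = ModuleCat.of R ((Module.Dual R (F (n+1))) ⧸ LinearMap.range ((d n).dualMap))) :
    (Function.Injective ((d 0).dualMap)) ∧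
    (∀ i : ℕ, i < n →
      LinearMap.range ((d i).dualMap) = LinearMap.ker ((d (i+1)).dualMap)) ∧
    (∀ i : ℕ, i ≤ n → LinearMap.range ((d i).dualMap) ≤
      (IsLocalRing.maximalIdeal R) • (⊤ : Submodule R (Module.Dual R (F (i+1))))) ∧
    (IsTrOmega R n L T) ∧
    (∀ i : ℕ, i ≤ n → ∀ K : ModuleCat.{u} R, IsMinSyz R i T K →
      IsTrOmega R (n - i) L K) ∧
    (∀ K : ModuleCat.{u} R, IsMinSyz R (n+1) T K →
      Nonempty (K ≃ₗ[R] Module.Dual R (F 0))) ∧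
    (∀ i : ℕ, n + 2 ≤ i → ∀ K : ModuleCat.{u} R, IsMinSyz R i T K → Subsingleton K) ∧
    (pdim R T = (((n + 1 : ℕ) : ℕ∞) : WithBot ℕ∞)) := by
  subst hT
  have hF (i : ℕ) : Module.Projective R (F i) := have := hFfree i; inferInstance
  have hvan {j : ℕ} (hj : j < t) (φ : Module.Dual R (F j)) (hφ : φ ∘ₗ d j = 0) :
      IsCoboundary d j φ := isCoboundary_of_depthE_eq hF hex0 hex hlen hdepth hj hφ
  have hinj := injective_dualMap_of_isCoboundary (hvan (by omega))
  have hexact (i : ℕ) (hi : i < n) :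
      LinearMap.range (d i).dualMap = LinearMap.ker (d (i + 1)).dualMap :=
    range_dualMap_eq_ker_of_isCoboundary
      (LinearMap.exact_iff.mpr (hex i).symm).linearMap_comp_eq_zero (hvan (by omega))
  have hdmin (i : ℕ) : LinearMap.range (d i).dualMap ≤ IsLocalRing.maximalIdeal R • ⊤ :=
    have := hFfin (i + 1); have := hFfree (i + 1); range_dualMap_le_smul (hmin i)
  have hlast := isMinSyz_succ_quotient_range_dualMap hFfin hFfree hexact hdmin hinj
  have : Nontrivial (F 0) := he.nontrivial
  have := nontrivial_dual_of_projective (R := R) (V := F 0)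
  refine ⟨hinj, hexact, fun i _ ↦ hdmin i,
    isTrOmega_of_nonempty_linearEquiv hFfin hFfree he hex0 hex hmin ⟨.refl R _⟩,
    fun i hi K hK ↦ isTrOmega_of_nonempty_linearEquiv hFfin hFfree he hex0 hex hmin
      (hK.nonempty_linearEquiv (isMinSyz_quotient_range_dualMap hFfin hFfree hexact hdmin
        (show i + (n - i) = n by omega))),
    fun K hK ↦ hK.nonempty_linearEquiv hlast,
    fun i hi K hK ↦ hlast.subsingleton_of_lt (by omega) hK, pdim_eq_of_isMinSyz hlast⟩

end ResolvPaper
end
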